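/- In the setting of Lemma 2 (previous statement, with y_m = X_m β_m + W_m θ_m + ε_m, mean-zero mutually independent W's independent of the errors, E[ε_m] = 0, E[ε_m ε_{m'}ᵀ] = Σ_{mm'}, and R := (y₃ − ŷ₃)ᵀ(ŷ* − ŷ)), suppose the cross-covariances with the third model are nonnegative scalar matrices: Σ₁₃ = σ₁₃ I and Σ₂₃ = σ₂₃ I with σ₁₃ ≥ 0 and σ₂₃ ≥ 0. Then E[R] ≤ 0. -/

import Mathlib

open Matrix MeasureTheory ProbabilityTheory
open scoped BigOperators

/-!
Write `yₘ = Xₘβₘ + zₘ` with centred noise `zₘ = Wₘθₘ + εₘ`. Pointwise,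
`R = y₃ᵀ G₁ y₁ + y₃ᵀ G₂ y₂` with `Gₘ = (I - H₃)(Hₘ - H)`. Since `Gₘ Xₘ = 0` and the random
effects are centred and independent of each other and of the errors,
`E[y₃ᵀ Gₘ yₘ] = tr(Gₘ Σₘ₃) = σₘ₃ tr Gₘ`.
Finally `tr Gₘ = -tr((I - H₃)(H - Hₘ)) ≤ 0`: as `col Xₘ ⊆ col X`, `H - Hₘ` is again an orthogonal
projection, and for orthogonal projections `tr(PQ) = tr(PQ(PQ)ᵀ) ≥ 0`.
-/

/-- The hat matrix `H_A = A (AᵀA)⁻¹ Aᵀ` of a design matrix `A`. -/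
noncomputable def hatMat {n : ℕ} {q : Type*} [Fintype q] [DecidableEq q]
    (A : Matrix (Fin n) q ℝ) : Matrix (Fin n) (Fin n) ℝ :=
  A * (Aᵀ * A)⁻¹ * Aᵀ

namespace Matrix

variable {ι : Type*} [Fintype ι]

theorem trace_mul_nonneg_of_isSymm_of_isIdempotentElem {P Q : Matrix ι ι ℝ}
    (hPs : P.IsSymm) (hPi : IsIdempotentElem P) (hQs : Q.IsSymm) (hQi : IsIdempotentElem Q) :
    0 ≤ (P * Q).trace := by
  have h : (P * Q).trace = ((P * Q) * (P * Q)ᴴ).trace := by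
    rw [conjTranspose_eq_transpose_of_trivial, transpose_mul, hPs.eq, hQs.eq, ← mul_assoc,
      mul_assoc P Q Q, hQi.eq, trace_mul_comm (P * Q) P, ← mul_assoc, hPi.eq]
  exact h ▸ (posSemidef_self_mul_conjTranspose (P * Q)).trace_nonneg

theorem trace_one_sub_mul_sub_nonpos [DecidableEq ι] {P Q H : Matrix ι ι ℝ}
    (hPs : P.IsSymm) (hPi : IsIdempotentElem P) (hQs : Q.IsSymm) (hQi : IsIdempotentElem Q)
    (hHs : H.IsSymm) (hHi : IsIdempotentElem H) (hHQ : H * Q = Q) :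
    ((1 - P) * (Q - H)).trace ≤ 0 := by
  have hQH : Q * H = Q := by
    simpa only [transpose_mul, hHs.eq, hQs.eq] using congrArg transpose hHQ
  have h := trace_mul_nonneg_of_isSymm_of_isIdempotentElem (isSymm_one.sub hPs) hPi.one_sub
    (hHs.sub hQs) (hQi.sub hHi hQH hHQ)
  rw [← neg_sub H Q, mul_neg, trace_neg]
  linarith

theorem IsSymm.sub_mulVec_dotProduct_sub_mulVec [DecidableEq ι] {P : Matrix ι ι ℝ}
    (hP : P.IsSymm) (Q₁ Q₂ H : Matrix ι ι ℝ) (u a b : ι → ℝ) :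
    (u - P *ᵥ u) ⬝ᵥ ((Q₁ *ᵥ a + Q₂ *ᵥ b) - H *ᵥ (a + b))
      = u ⬝ᵥ ((1 - P) * (Q₁ - H)) *ᵥ a + u ⬝ᵥ ((1 - P) * (Q₂ - H)) *ᵥ b :=
  calc _ = ((1 - P) *ᵥ u) ⬝ᵥ ((Q₁ - H) *ᵥ a + (Q₂ - H) *ᵥ b) := by
        rw [sub_mulVec, one_mulVec, sub_mulVec, sub_mulVec, mulVec_add H]
        congr 1
        abel
    _ = u ⬝ᵥ (1 - P) *ᵥ ((Q₁ - H) *ᵥ a + (Q₂ - H) *ᵥ b) := by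
        rw [← vecMul_transpose (1 - P) u, (isSymm_one.sub hP).eq, dotProduct_mulVec]
    _ = _ := by rw [mulVec_add, dotProduct_add, mulVec_mulVec, mulVec_mulVec]

theorem dotProduct_mulVec_eq_sum_sum (u v : ι → ℝ) (G : Matrix ι ι ℝ) :
    u ⬝ᵥ G *ᵥ v = ∑ j, ∑ k, G j k * (u j * v k) := by
  simp only [dotProduct, mulVec, Finset.mul_sum]
  exact Finset.sum_congr rfl fun j _ => Finset.sum_congr rfl fun k _ => by ring

end Matrix

section HatMatrix

variable {n : ℕ} {q q' q'' : Type*} [Fintype q] [DecidableEq q] [Fintype q'] [DecidableEq q']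
  [Fintype q''] [DecidableEq q''] {A : Matrix (Fin n) q ℝ} {B : Matrix (Fin n) q' ℝ}
  {C : Matrix (Fin n) q'' ℝ}

theorem hatMat_isSymm (A : Matrix (Fin n) q ℝ) : (hatMat A).IsSymm := by
  simp [IsSymm, hatMat, transpose_mul, transpose_nonsing_inv, Matrix.mul_assoc]

theorem hatMat_mul_self (hA : IsUnit (Aᵀ * A)) : hatMat A * A = A := by
  rw [hatMat, Matrix.mul_assoc, Matrix.mul_assoc,
    nonsing_inv_mul _ ((isUnit_iff_isUnit_det _).1 hA), Matrix.mul_one]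

theorem mul_hatMat_of_mul_eq {K : Matrix (Fin n) (Fin n) ℝ} (hK : K * A = A) :
    K * hatMat A = hatMat A := by
  rw [hatMat, ← Matrix.mul_assoc, ← Matrix.mul_assoc, hK]

theorem isIdempotentElem_hatMat (hA : IsUnit (Aᵀ * A)) : IsIdempotentElem (hatMat A) :=
  mul_hatMat_of_mul_eq (hatMat_mul_self hA)

theorem hatMat_fromCols_mul (hAB : IsUnit ((fromCols A B)ᵀ * fromCols A B)) :
    hatMat (fromCols A B) * A = A ∧ hatMat (fromCols A B) * B = B := by
  simpa only [mul_fromCols, fromCols_inj.eq_iff] using hatMat_mul_self hAB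

theorem hatMat_sub_hatMat_mul_self (hA : IsUnit (Aᵀ * A)) (hCA : hatMat C * A = A) :
    (hatMat A - hatMat C) * A = 0 := by
  rw [Matrix.sub_mul, hatMat_mul_self hA, hCA, sub_self]

theorem trace_one_sub_hatMat_mul_hatMat_sub_hatMat_nonpos (hA : IsUnit (Aᵀ * A))
    (hB : IsUnit (Bᵀ * B)) (hC : IsUnit (Cᵀ * C)) (hCA : hatMat C * A = A) :
    ((1 - hatMat B) * (hatMat A - hatMat C)).trace ≤ 0 :=
  trace_one_sub_mul_sub_nonpos (hatMat_isSymm B) (isIdempotentElem_hatMat hB) (hatMat_isSymm A)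
    (isIdempotentElem_hatMat hA) (hatMat_isSymm C) (isIdempotentElem_hatMat hC)
    (mul_hatMat_of_mul_eq hCA)

end HatMatrix

section Moments

variable {Ω : Type*} [MeasurableSpace Ω] {P : Measure Ω}

theorem integral_mul_eq_zero_of_indepFun {f g : Ω → ℝ} (hfg : IndepFun f g P)
    (hf : AEStronglyMeasurable f P) (hg : AEStronglyMeasurable g P) (hf0 : ∫ ω, f ω ∂P = 0) :
    ∫ ω, f ω * g ω ∂P = 0 := by
  simpa [hf0] using hfg.integral_mul_eq_mul_integral hf hg

theorem integral_add_mul_add_of_indepFun {a b a' b' : Ω → ℝ} (ha : MemLp a 2 P)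
    (hb : MemLp b 2 P) (ha' : MemLp a' 2 P) (hb' : MemLp b' 2 P) (haa' : IndepFun a a' P)
    (hab' : IndepFun a b' P) (hba' : IndepFun b a' P) (ha0 : ∫ ω, a ω ∂P = 0)
    (ha'0 : ∫ ω, a' ω ∂P = 0) :
    ∫ ω, (a ω + b ω) * (a' ω + b' ω) ∂P = ∫ ω, b ω * b' ω ∂P := by
  have hba'_zero : ∫ ω, b ω * a' ω ∂P = 0 := by
    rw [← integral_mul_eq_zero_of_indepFun hba'.symm ha'.1 hb.1 ha'0]
    simp only [mul_comm]
  have hI {f g : Ω → ℝ} (hf : MemLp f 2 P) (hg : MemLp g 2 P) :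
      Integrable (fun ω => f ω * g ω) P := hf.integrable_mul hg
  simp only [add_mul, mul_add]
  rw [integral_add ((hI ha ha').fun_add (hI hb ha')) ((hI ha hb').fun_add (hI hb hb')),
    integral_add (hI ha ha') (hI hb ha'), integral_add (hI ha hb') (hI hb hb'),
    integral_mul_eq_zero_of_indepFun haa' ha.1 ha'.1 ha0,
    integral_mul_eq_zero_of_indepFun hab' ha.1 hb'.1 ha0, hba'_zero]
  ring

theorem integral_const_add_mul_const_add [IsProbabilityMeasure P] {f g : Ω → ℝ}
    (hf : MemLp f 2 P) (hg : MemLp g 2 P) (hf0 : ∫ ω, f ω ∂P = 0) (hg0 : ∫ ω, g ω ∂P = 0)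
    (a b : ℝ) : ∫ ω, (a + f ω) * (b + g ω) ∂P = a * b + ∫ ω, f ω * g ω ∂P := by
  have hf1 := hf.integrable one_le_two
  have hg1 := hg.integrable one_le_two
  simp only [add_mul, mul_add]
  have hfg : Integrable (fun ω => f ω * g ω) P := hf.integrable_mul hg
  rw [integral_add ((integrable_const _).fun_add (hf1.mul_const b))
      ((hg1.const_mul a).fun_add hfg),
    integral_add (integrable_const _) (hf1.mul_const b),
    integral_add (hg1.const_mul a) hfg,
    integral_const, integral_const_mul, integral_mul_const, hf0, hg0]
  simp

variable {ι : Type*} [Fintype ι] {u v : Ω → ι → ℝ}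

theorem integrable_dotProduct_mulVec (hu : ∀ i, MemLp (fun ω => u ω i) 2 P)
    (hv : ∀ i, MemLp (fun ω => v ω i) 2 P) (G : Matrix ι ι ℝ) :
    Integrable (fun ω => u ω ⬝ᵥ G *ᵥ v ω) P := by
  simp only [dotProduct_mulVec_eq_sum_sum]
  exact integrable_finsetSum _ fun j _ => integrable_finsetSum _ fun k _ =>
    ((hu j).integrable_mul (hv k)).const_mul _

theorem integral_dotProduct_mulVec (hu : ∀ i, MemLp (fun ω => u ω i) 2 P)
    (hv : ∀ i, MemLp (fun ω => v ω i) 2 P) (G : Matrix ι ι ℝ) :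
    ∫ ω, u ω ⬝ᵥ G *ᵥ v ω ∂P = ∑ j, ∑ k, G j k * ∫ ω, u ω j * v ω k ∂P := by
  have hI (j k : ι) : Integrable (fun ω => u ω j * v ω k) P := (hu j).integrable_mul (hv k)
  simp only [dotProduct_mulVec_eq_sum_sum]
  rw [integral_finsetSum (f := fun j ω => ∑ k, G j k * (u ω j * v ω k)) _
    fun j _ => integrable_finsetSum _ fun k _ => (hI j k).const_mul _]
  refine Finset.sum_congr rfl fun j _ => ?_
  rw [integral_finsetSum _ fun k _ => (hI j k).const_mul _]
  exact Finset.sum_congr rfl fun k _ => integral_const_mul _ _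

theorem integral_const_add_dotProduct_mulVec_const_add [IsProbabilityMeasure P]
    (hu : ∀ i, MemLp (fun ω => u ω i) 2 P) (hv : ∀ i, MemLp (fun ω => v ω i) 2 P)
    (hu0 : ∀ i, ∫ ω, u ω i ∂P = 0) (hv0 : ∀ i, ∫ ω, v ω i ∂P = 0)
    (c d : ι → ℝ) (G S : Matrix ι ι ℝ) (huv : ∀ j k, ∫ ω, u ω j * v ω k ∂P = S j k) :
    ∫ ω, (c + u ω) ⬝ᵥ G *ᵥ (d + v ω) ∂P = c ⬝ᵥ G *ᵥ d + (G * Sᵀ).trace := by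
  have hcu (i : ι) : MemLp (fun ω => (c + u ω) i) 2 P := (memLp_const (c i)).add (hu i)
  have hdv (i : ι) : MemLp (fun ω => (d + v ω) i) 2 P := (memLp_const (d i)).add (hv i)
  rw [integral_dotProduct_mulVec hcu hdv]
  simp only [Pi.add_apply, integral_const_add_mul_const_add (hu _) (hv _) (hu0 _) (hv0 _), huv]
  simp only [mul_add, Finset.sum_add_distrib, dotProduct_mulVec_eq_sum_sum, trace, diag, mul_apply,
    transpose_apply]

end Moments

section LinearModel

variable {Ω ι r c : Type*} [MeasurableSpace Ω] {P : Measure Ω} [Fintype c]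
  {W : ι → Ω → r → c → ℝ} {ε : ι → Ω → r → ℝ} (θ : ι → c → ℝ)

theorem measurable_mulVec_apply (v : c → ℝ) (i : r) :
    Measurable fun M : r → c → ℝ => (of M *ᵥ v) i := by
  simp only [mulVec, dotProduct, of_apply]
  fun_prop

theorem memLp_mulVec_apply (hW : ∀ m i j, MemLp (fun ω => W m ω i j) 2 P) (m : ι) (i : r) :
    MemLp (fun ω => (of (W m ω) *ᵥ θ m) i) 2 P := by
  simp only [mulVec, dotProduct, of_apply]
  exact memLp_finsetSum _ fun a _ => (hW m i a).mul_const _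

theorem integral_mulVec_apply (hW : ∀ m i j, Integrable (fun ω => W m ω i j) P)
    (hW0 : ∀ m i j, ∫ ω, W m ω i j ∂P = 0) (m : ι) (i : r) :
    ∫ ω, (of (W m ω) *ᵥ θ m) i ∂P = 0 := by
  simp only [mulVec, dotProduct, of_apply]
  rw [integral_finsetSum _ fun a _ => (hW m i a).mul_const _]
  simp [integral_mul_const, hW0]

theorem integral_noise [IsFiniteMeasure P] (hWL2 : ∀ m i j, MemLp (fun ω => W m ω i j) 2 P)
    (hWmean : ∀ m i j, ∫ ω, W m ω i j ∂P = 0) (hεL2 : ∀ m i, MemLp (fun ω => ε m ω i) 2 P)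
    (hεmean : ∀ m i, ∫ ω, ε m ω i ∂P = 0) (m : ι) (i : r) :
    ∫ ω, (of (W m ω) *ᵥ θ m + ε m ω) i ∂P = 0 := by
  simp only [Pi.add_apply]
  rw [integral_add ((memLp_mulVec_apply θ hWL2 m i).integrable one_le_two)
    ((hεL2 m i).integrable one_le_two),
    integral_mulVec_apply θ (fun m i j => (hWL2 m i j).integrable one_le_two) hWmean, hεmean,
    add_zero]

theorem integral_noise_mul_noise [IsFiniteMeasure P]
    (hWL2 : ∀ m i j, MemLp (fun ω => W m ω i j) 2 P) (hWmean : ∀ m i j, ∫ ω, W m ω i j ∂P = 0)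
    (hWindep : iIndepFun W P)
    (hWε : IndepFun (fun ω => fun m => W m ω) (fun ω => fun m => ε m ω) P)
    (hεL2 : ∀ m i, MemLp (fun ω => ε m ω i) 2 P) {m m' : ι} (hm : m ≠ m') (i j : r) :
    ∫ ω, (of (W m ω) *ᵥ θ m + ε m ω) i * (of (W m' ω) *ᵥ θ m' + ε m' ω) j ∂P
      = ∫ ω, ε m ω i * ε m' ω j ∂P := by
  have hWε' (m m' : ι) (i j : r) :
      IndepFun (fun ω => (of (W m ω) *ᵥ θ m) i) (fun ω => ε m' ω j) P :=
    hWε.comp ((measurable_mulVec_apply (θ m) i).comp (measurable_pi_apply m))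
      ((measurable_pi_apply j).comp (measurable_pi_apply m'))
  have hW0 := integral_mulVec_apply θ (fun m i j => (hWL2 m i j).integrable one_le_two) hWmean
  exact integral_add_mul_add_of_indepFun (memLp_mulVec_apply θ hWL2 m i) (hεL2 m i)
    (memLp_mulVec_apply θ hWL2 m' j) (hεL2 m' j)
    ((hWindep.indepFun hm).comp (measurable_mulVec_apply (θ m) i)
      (measurable_mulVec_apply (θ m') j))
    (hWε' m m' i j) (hWε' m' m j i).symm (hW0 m i) (hW0 m' j)

variable {k : Type*} [Fintype k] (X : ι → Matrix r k ℝ) (β : ι → k → ℝ)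

theorem memLp_response [IsFiniteMeasure P] (hWL2 : ∀ m i j, MemLp (fun ω => W m ω i j) 2 P)
    (hεL2 : ∀ m i, MemLp (fun ω => ε m ω i) 2 P) (m : ι) (i : r) :
    MemLp (fun ω => (X m *ᵥ β m + of (W m ω) *ᵥ θ m + ε m ω) i) 2 P :=
  ((memLp_const ((X m *ᵥ β m) i)).add (memLp_mulVec_apply θ hWL2 m i)).add (hεL2 m i)

theorem integral_response_dotProduct_mulVec [Fintype r] [IsProbabilityMeasure P]
    (hWL2 : ∀ m i j, MemLp (fun ω => W m ω i j) 2 P) (hWmean : ∀ m i j, ∫ ω, W m ω i j ∂P = 0)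
    (hWindep : iIndepFun W P)
    (hWε : IndepFun (fun ω => fun m => W m ω) (fun ω => fun m => ε m ω) P)
    (hεL2 : ∀ m i, MemLp (fun ω => ε m ω i) 2 P) (hεmean : ∀ m i, ∫ ω, ε m ω i ∂P = 0)
    {m m' : ι} (hm : m ≠ m') {S : Matrix r r ℝ}
    (hS : ∀ i j, ∫ ω, ε m ω i * ε m' ω j ∂P = S i j) (G : Matrix r r ℝ) :
    ∫ ω, (X m *ᵥ β m + of (W m ω) *ᵥ θ m + ε m ω) ⬝ᵥ
        G *ᵥ (X m' *ᵥ β m' + of (W m' ω) *ᵥ θ m' + ε m' ω) ∂P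
      = X m *ᵥ β m ⬝ᵥ G *ᵥ (X m' *ᵥ β m') + (G * Sᵀ).trace := by
  simp only [add_assoc]
  exact integral_const_add_dotProduct_mulVec_const_add
    (fun i => (memLp_mulVec_apply θ hWL2 m i).add (hεL2 m i))
    (fun i => (memLp_mulVec_apply θ hWL2 m' i).add (hεL2 m' i))
    (integral_noise θ hWL2 hWmean hεL2 hεmean m) (integral_noise θ hWL2 hWmean hεL2 hεmean m')
    _ _ G S fun i j =>
      (integral_noise_mul_noise θ hWL2 hWmean hWindep hWε hεL2 hm i j).trans (hS i j)

end LinearModel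

/-- **Lemma 2** (inequality conclusion): if the cross-covariances with the third model
are nonnegative scalar matrices, `Σ₁₃ = σ₁₃ I`, `Σ₂₃ = σ₂₃ I`, `σ₁₃, σ₂₃ ≥ 0`,
then `E[R] ≤ 0`. -/
theorem expectation_R_nonpos {n p : ℕ}
    {Ω : Type*} [MeasurableSpace Ω] (P : Measure Ω) [IsProbabilityMeasure P]
    (X : Fin 3 → Matrix (Fin n) (Fin p) ℝ)
    (hXm : ∀ m, IsUnit ((X m)ᵀ * X m))
    (hX : IsUnit ((fromCols (X 0) (X 1))ᵀ * fromCols (X 0) (X 1)))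
    (β θ : Fin 3 → Fin p → ℝ)
    (W : Fin 3 → Ω → Fin n → Fin p → ℝ)
    (ε : Fin 3 → Ω → Fin n → ℝ)
    (Sig : Fin 3 → Fin 3 → Matrix (Fin n) (Fin n) ℝ)
    (σ₁₃ σ₂₃ : ℝ)
    (hWL2 : ∀ m i j, MemLp (fun ω => W m ω i j) 2 P)
    (hWmean : ∀ m i j, ∫ ω, W m ω i j ∂P = 0)
    (hWindep : iIndepFun W P)
    (hWε : IndepFun (fun ω => fun m => W m ω) (fun ω => fun m => ε m ω) P)
    (hεL2 : ∀ m i, MemLp (fun ω => ε m ω i) 2 P)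
    (hεmean : ∀ m i, ∫ ω, ε m ω i ∂P = 0)
    (hcov : ∀ m m' i j, ∫ ω, ε m ω i * ε m' ω j ∂P = Sig m m' i j)
    (hS13 : Sig 0 2 = σ₁₃ • (1 : Matrix (Fin n) (Fin n) ℝ))
    (hS23 : Sig 1 2 = σ₂₃ • (1 : Matrix (Fin n) (Fin n) ℝ))
    (hσ13 : 0 ≤ σ₁₃) (hσ23 : 0 ≤ σ₂₃) :
    let y : Fin 3 → Ω → Fin n → ℝ :=
      fun m ω => (X m).mulVec (β m) + (Matrix.of (W m ω)).mulVec (θ m) + ε m ω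
    let H := hatMat (fromCols (X 0) (X 1))
    let H₁ := hatMat (X 0)
    let H₂ := hatMat (X 1)
    let H₃ := hatMat (X 2)
    (∫ ω, (y 2 ω - H₃.mulVec (y 2 ω)) ⬝ᵥ
        ((H₁.mulVec (y 0 ω) + H₂.mulVec (y 1 ω)) - H.mulVec (y 0 ω + y 1 ω)) ∂P)
      ≤ 0 := by
  intro y H H₁ H₂ H₃
  obtain ⟨hHX₀, hHX₁⟩ := hatMat_fromCols_mul hX
  have hyL2 := memLp_response θ X β hWL2 hεL2
  have hterm (m : Fin 3) (hm : m ≠ 2) {σ : ℝ} (hσ : 0 ≤ σ) (hS : Sig m 2 = σ • 1)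
      (hHX : H * X m = X m) :
      ∫ ω, y 2 ω ⬝ᵥ ((1 - H₃) * (hatMat (X m) - H)) *ᵥ y m ω ∂P ≤ 0 := by
    have hSig : (Sig 2 m)ᵀ = σ • 1 := by
      ext i j
      rw [transpose_apply, ← hcov, ← hS, ← hcov]
      simp only [mul_comm]
    rw [integral_response_dotProduct_mulVec θ X β hWL2 hWmean hWindep hWε hεL2 hεmean hm.symm
      (hcov 2 m), mulVec_mulVec, Matrix.mul_assoc, hatMat_sub_hatMat_mul_self (hXm m) hHX,
      Matrix.mul_zero, zero_mulVec, dotProduct_zero, zero_add, hSig, Matrix.mul_smul,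
      Matrix.mul_one, trace_smul, smul_eq_mul]
    exact mul_nonpos_of_nonneg_of_nonpos hσ
      (trace_one_sub_hatMat_mul_hatMat_sub_hatMat_nonpos (hXm m) (hXm 2) hX hHX)
  have hH₃ : H₃.IsSymm := hatMat_isSymm (X 2)
  simp only [hH₃.sub_mulVec_dotProduct_sub_mulVec]
  rw [integral_add (integrable_dotProduct_mulVec (hyL2 2) (hyL2 0) _)
    (integrable_dotProduct_mulVec (hyL2 2) (hyL2 1) _)]
  exact add_nonpos (hterm 0 (by decide) hσ13 hS13 hHX₀) (hterm 1 (by decide) hσ23 hS23 hHX₁)
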